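/- Let R be an alternative ring and n an element of the nucleus of R. Then n commutes with every associator: n*(x,y,z) = (x,y,z)*n for all x, y, z in R. -/

import Mathlib

/-!
Linearizing the alternative laws shows that the associator is alternating, in particular invariant
under cyclic permutations, so a nuclear element `n` lies in the middle and right nuclei as well.
Feeding `n` into each slot of the Teichmüller identity (`associator_cocycle`) gives
`(n x, y, z) = n (x, y, z)`, `(w, x n, z) = (w, x, n z)` and `(x, y, z n) = (x, y, z) n`, and
`n (x, y, z) = (n x, y, z) = (y, z, n x) = (y, z n, x) = (x, y, z n) = (x, y, z) n`.
-/

section NonUnitalNonAssocRing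

variable {R : Type*} [NonUnitalNonAssocRing R]

theorem associator_swap_left (hl : ∀ x y : R, (x * x) * y = x * (x * y)) (x y z : R) :
    associator y x z = -associator x y z := by
  have hxy := hl (x + y) z
  simp only [add_mul, mul_add] at hxy
  rw [associator, associator]
  linear_combination (norm := abel) hxy - hl x z - hl y z

theorem associator_swap_right (hr : ∀ x y : R, (y * x) * x = y * (x * x)) (x y z : R) :
    associator x z y = -associator x y z := by
  have hyz := hr (y + z) x
  simp only [add_mul, mul_add] at hyz
  rw [associator, associator]
  linear_combination (norm := abel) hyz - hr y x - hr z x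

theorem associator_cycle (hl : ∀ x y : R, (x * x) * y = x * (x * y))
    (hr : ∀ x y : R, (y * x) * x = y * (x * x)) (x y z : R) :
    associator y z x = associator x y z := by
  rw [associator_swap_right hr y x z, associator_swap_left hl x y z, neg_neg]

theorem associator_mid_eq_zero {n : R} (hl : ∀ x y : R, (x * x) * y = x * (x * y))
    (hn : ∀ x y : R, associator n x y = 0) (x y : R) : associator x n y = 0 := by
  rw [associator_swap_left hl, hn, neg_zero]

theorem associator_right_eq_zero {n : R} (hr : ∀ x y : R, (y * x) * x = y * (x * x))
    (hn : ∀ x y : R, associator x n y = 0) (x y : R) : associator x y n = 0 := by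
  rw [associator_swap_right hr, hn, neg_zero]

theorem associator_mul_left {n : R} (hn : ∀ x y : R, associator n x y = 0) (x y z : R) :
    associator (n * x) y z = n * associator x y z := by
  have h := associator_cocycle n x y z
  simp only [hn, zero_mul, add_zero, sub_zero] at h
  linear_combination (norm := abel) -h

theorem associator_mul_mid {n : R} (hn_mid : ∀ x y : R, associator x n y = 0)
    (hn_right : ∀ x y : R, associator x y n = 0) (w x z : R) :
    associator w (x * n) z = associator w x (n * z) := by
  have h := associator_cocycle w x n z
  simp only [hn_mid, hn_right, mul_zero, zero_mul, sub_zero, add_zero] at h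
  linear_combination (norm := abel) h

theorem associator_mul_right {n : R} (hn : ∀ x y : R, associator x y n = 0) (x y z : R) :
    associator x y (z * n) = associator x y z * n := by
  have h := associator_cocycle x y z n
  simp only [hn, mul_zero, sub_zero, add_zero, zero_sub] at h
  linear_combination (norm := abel) -h

end NonUnitalNonAssocRing

theorem stmt_7 {R : Type*} [NonUnitalNonAssocRing R]
    (hl : ∀ x y : R, (x*x)*y = x*(x*y))
    (hr : ∀ x y : R, (y*x)*x = y*(x*x))
    (n : R) (hn : ∀ x y : R, (n*x)*y = n*(x*y)) :
    ∀ x y z : R, n*((x*y)*z - x*(y*z)) = ((x*y)*z - x*(y*z))*n := by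
  intro x y z
  have hn_left : ∀ x y : R, associator n x y = 0 := fun x y => sub_eq_zero.2 (hn x y)
  have hn_mid := associator_mid_eq_zero hl hn_left
  have hn_right := associator_right_eq_zero hr hn_mid
  calc n * associator x y z
      = associator (n * x) y z := (associator_mul_left hn_left x y z).symm
    _ = associator y z (n * x) := (associator_cycle hl hr _ _ _).symm
    _ = associator y (z * n) x := (associator_mul_mid hn_mid hn_right y z x).symm
    _ = associator x y (z * n) := associator_cycle hl hr _ _ _
    _ = associator x y z * n := associator_mul_right hn_right x y z
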